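/- Let Z be a set, 𝒴 ⊆ 𝒫(Z) closed under arbitrary intersections and finite unions, containing all singletons, with ∅, Z ∈ 𝒴, and μ : 𝒴 → 𝒴. (a) If μ satisfies (μ=) for finite sets, (μ∈), (μPR3) and (μ∅fin), then there is a ranked binary relation ≺ on Z (a ranked preferential structure without copies) such that every finite nonempty X ∈ 𝒴 contains a ≺-minimal element and μ(U) = ⌢(μ_≺(U)) for all U ∈ 𝒴, where μ_≺(U) := {x ∈ U : there is no x' ∈ U with x' ≺ x}. (b) Conversely, if ≺ is a ranked binary relation on Z such that every finite nonempty X ∈ 𝒴 contains a ≺-minimal element and μ : 𝒴 → 𝒴 satisfies μ(U) = ⌢(μ_≺(U)) for all U ∈ 𝒴, then μ satisfies (μ=) for finite sets, (μ∈), (μPR3) and (μ∅fin). -/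

import Mathlib

universe u

/-- The hull `⌢A` of `A` with respect to 𝒴. -/
def hull {Z : Type u} (𝒴 : Set (Set Z)) (A : Set Z) : Set Z :=
  ⋂₀ {X | X ∈ 𝒴 ∧ A ⊆ X}

/-- `μ₃(U) := {x ∈ U : for all y ∈ U, x ∈ μ({x, y})}`. -/
def mu3 {Z : Type u} (μ : Set Z → Set Z) (U : Set Z) : Set Z :=
  {x ∈ U | ∀ y ∈ U, x ∈ μ {x, y}}

/-- A binary relation is ranked iff incomparable elements are below resp.
above exactly the same elements. -/
def RankedRel {Z : Type u} (prec : Z → Z → Prop) : Prop :=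
  ∀ x x' : Z, ¬ prec x x' → ¬ prec x' x →
    ∀ y : Z, (prec y x ↔ prec y x') ∧ (prec x y ↔ prec x' y)

/-- The set of `≺`-minimal elements of `U` (structure without copies). -/
def muMin {Z : Type u} (prec : Z → Z → Prop) (U : Set Z) : Set Z :=
  {x ∈ U | ∀ y ∈ U, ¬ prec y x}

/-!
For (a) take `x ≺ y` iff `x ∈ μ{x, y} ∌ y`. Then `μ_≺ = μ₃`. By (μ∈), `μ₃(U) ⊆ μ(U)`, and for any
`X ∈ 𝒴` containing `μ₃(U)` the set `X ∩ μ(U) ∈ 𝒴` lies between `μ₃(U)` and `μ(U)`, so (μPR3) forces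
`μ(U) ⊆ X`; that is, `μ(U) = ⌢μ₃(U)`. On finite sets (μ=) gives `μ(T) ∩ {a, b} = μ{a, b}` whenever
the left side is nonempty, so inside `T = {x, x', y}` every comparison with `y` is decided by
membership in `μ(T)`, which makes `≺` ranked; it also gives `μ = μ₃` on finite sets, whence the minimal
elements.

For (b), finite sets lie in 𝒴, so `μ = μ_≺` on them, and the four conditions are the familiar
properties of minimisation along a ranked relation.
-/

section

variable {Z : Type u} {𝒴 : Set (Set Z)} {μ : Set Z → Set Z}

def MuEqFinite (𝒴 : Set (Set Z)) (μ : Set Z → Set Z) : Prop :=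
  ∀ X ∈ 𝒴, ∀ Y ∈ 𝒴, X.Finite → Y.Finite → X ⊆ Y → (μ Y ∩ X).Nonempty → μ Y ∩ X = μ X

def MuIn (𝒴 : Set (Set Z)) (μ : Set Z → Set Z) : Prop :=
  ∀ X ∈ 𝒴, ∀ a ∈ X, a ∉ μ X → ∃ b ∈ X, a ∉ μ {a, b}

def MuPR3 (𝒴 : Set (Set Z)) (μ : Set Z → Set Z) : Prop :=
  ∀ U ∈ 𝒴, ¬ ∃ X ∈ 𝒴, mu3 μ U ⊆ X ∧ X ⊂ μ U

def MuNonemptyFinite (𝒴 : Set (Set Z)) (μ : Set Z → Set Z) : Prop :=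
  ∀ X ∈ 𝒴, X.Finite → X.Nonempty → (μ X).Nonempty

def pairPrec (μ : Set Z → Set Z) (a b : Z) : Prop :=
  a ∈ μ {a, b} ∧ b ∉ μ {a, b}

lemma subset_hull (𝒴 : Set (Set Z)) (A : Set Z) : A ⊆ hull 𝒴 A :=
  fun _ hx _ hX => hX.2 hx

lemma hull_subset_of_mem {A X : Set Z} (hX : X ∈ 𝒴) (h : A ⊆ X) : hull 𝒴 A ⊆ X :=
  Set.sInter_subset_of_mem ⟨hX, h⟩

lemma hull_eq_self {A : Set Z} (hA : A ∈ 𝒴) : hull 𝒴 A = A :=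
  (hull_subset_of_mem hA subset_rfl).antisymm (subset_hull 𝒴 A)

lemma mem_of_finite (hUnion : ∀ A ∈ 𝒴, ∀ B ∈ 𝒴, A ∪ B ∈ 𝒴) (hsing : ∀ x : Z, {x} ∈ 𝒴)
    (hempty : (∅ : Set Z) ∈ 𝒴) {S : Set Z} (hS : S.Finite) : S ∈ 𝒴 := by
  induction S, hS using Set.Finite.induction_on with
  | empty => exact hempty
  | insert _ _ ih => exact Set.insert_eq _ _ ▸ hUnion _ (hsing _) _ ih

lemma inter_mem (hInter : ∀ S : Set (Set Z), S ⊆ 𝒴 → S.Nonempty → ⋂₀ S ∈ 𝒴) {A B : Set Z}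
    (hA : A ∈ 𝒴) (hB : B ∈ 𝒴) : A ∩ B ∈ 𝒴 :=
  Set.sInter_pair A B ▸ hInter {A, B} (Set.insert_subset hA (Set.singleton_subset_iff.2 hB))
    (Set.insert_nonempty A {B})

section Ranked

variable {prec : Z → Z → Prop}

lemma muMin_subset (prec : Z → Z → Prop) (U : Set Z) : muMin prec U ⊆ U :=
  fun _ hx => hx.1

lemma not_prec_self_of_muMin_singleton {a : Z} (h : (muMin prec {a}).Nonempty) : ¬ prec a a := by
  obtain ⟨x, rfl, hx⟩ := h
  exact hx x rfl

lemma mem_muMin_pair (hirr : ∀ a, ¬ prec a a) {x y : Z} :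
    x ∈ muMin prec {x, y} ↔ ¬ prec y x := by
  simp [muMin, hirr]

lemma RankedRel.muMin_inter_eq (hr : RankedRel prec) {X Y : Set Z} (hXY : X ⊆ Y)
    (hne : (muMin prec Y ∩ X).Nonempty) : muMin prec Y ∩ X = muMin prec X := by
  obtain ⟨a, ⟨-, haY⟩, haX⟩ := hne
  ext x
  refine ⟨fun ⟨⟨_, hxY⟩, hxX⟩ => ⟨hxX, fun y hy => hxY y (hXY hy)⟩, fun ⟨hxX, hxmin⟩ => ?_⟩
  refine ⟨⟨hXY hxX, fun y hy hyx => ?_⟩, hxX⟩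
  -- `x` and `a` are incomparable, so `y ≺ x` would give `y ≺ a`
  exact haY y hy (((hr x a (haY x (hXY hxX)) (hxmin a haX)) y).1.1 hyx)

end Ranked

section Soundness

variable {prec : Z → Z → Prop} (hfin : ∀ S : Set Z, S.Finite → S ∈ 𝒴)
  (hrep : ∀ U ∈ 𝒴, μ U = hull 𝒴 (muMin prec U))
include hfin hrep

lemma mu_eq_muMin_of_finite {X : Set Z} (hX : X.Finite) : μ X = muMin prec X := by
  rw [hrep X (hfin X hX), hull_eq_self (hfin _ (hX.subset (muMin_subset prec X)))]

lemma muEqFinite_of_repr (hr : RankedRel prec) : MuEqFinite 𝒴 μ := by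
  intro X _ Y _ hXf hYf hXY hne
  rw [mu_eq_muMin_of_finite hfin hrep hYf] at hne ⊢
  rw [mu_eq_muMin_of_finite hfin hrep hXf]
  exact hr.muMin_inter_eq hXY hne

lemma muIn_of_repr : MuIn 𝒴 μ := by
  intro X hX a haX haμ
  have ha : a ∉ muMin prec X := fun h => haμ (hrep X hX ▸ subset_hull 𝒴 _ h)
  obtain ⟨b, hbX, hba⟩ : ∃ b ∈ X, prec b a := by simpa [muMin, haX] using ha
  refine ⟨b, hbX, fun h => ?_⟩
  rw [mu_eq_muMin_of_finite hfin hrep (Set.toFinite _)] at h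
  exact h.2 b (by simp) hba

lemma muPR3_of_repr (hirr : ∀ a, ¬ prec a a) : MuPR3 𝒴 μ := by
  rintro U hU ⟨X, hX, hmu3X, hXμ⟩
  have hmin : muMin prec U ⊆ mu3 μ U := fun x hx =>
    ⟨hx.1, fun y hy => by
      rw [mu_eq_muMin_of_finite hfin hrep (Set.toFinite _), mem_muMin_pair hirr]
      exact hx.2 y hy⟩
  exact hXμ.not_subset (hrep U hU ▸ hull_subset_of_mem hX (hmin.trans hmu3X))

end Soundness

lemma muNonemptyFinite_of_repr {prec : Z → Z → Prop}
    (hrep : ∀ U ∈ 𝒴, μ U = hull 𝒴 (muMin prec U)) (hmin : MuNonemptyFinite 𝒴 (muMin prec)) :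
    MuNonemptyFinite 𝒴 μ := fun X hX hXf hXne =>
  hrep X hX ▸ (hmin X hX hXf hXne).mono (subset_hull 𝒴 _)

section Completeness

lemma mu3_subset_mu (hIn : MuIn 𝒴 μ) {X : Set Z} (hX : X ∈ 𝒴) : mu3 μ X ⊆ μ X := by
  intro x ⟨hxX, hx⟩
  by_contra hxμ
  obtain ⟨b, hb, hxb⟩ := hIn X hX x hxX hxμ
  exact hxb (hx b hb)

variable (hinter : ∀ A ∈ 𝒴, ∀ B ∈ 𝒴, A ∩ B ∈ 𝒴) (hmem : ∀ X ∈ 𝒴, μ X ∈ 𝒴)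
  (hIn : MuIn 𝒴 μ) (hPR3 : MuPR3 𝒴 μ)
include hinter hmem hIn hPR3

lemma mu_subset_of_mu3_subset {U X : Set Z} (hU : U ∈ 𝒴) (hX : X ∈ 𝒴) (h : mu3 μ U ⊆ X) :
    μ U ⊆ X := by
  by_contra hμX
  refine hPR3 U hU ⟨X ∩ μ U, hinter X hX _ (hmem U hU), Set.subset_inter h (mu3_subset_mu hIn hU),
    Set.inter_subset_right.ssubset_of_not_subset fun hsub => hμX fun x hx => (hsub hx).1⟩

lemma mu_subset_self {U : Set Z} (hU : U ∈ 𝒴) : μ U ⊆ U :=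
  mu_subset_of_mu3_subset hinter hmem hIn hPR3 hU hU fun _ hx => hx.1

lemma mu_eq_hull_mu3 {U : Set Z} (hU : U ∈ 𝒴) : μ U = hull 𝒴 (mu3 μ U) :=
  Set.Subset.antisymm
    (fun _ hx _ ⟨hX, hsub⟩ => mu_subset_of_mu3_subset hinter hmem hIn hPR3 hU hX hsub hx)
    (hull_subset_of_mem (hmem U hU) (mu3_subset_mu hIn hU))

end Completeness

lemma muMin_pairPrec_eq_mu3 (hcover : ∀ x y : Z, x ∈ μ {x, y} ∨ y ∈ μ {x, y}) (U : Set Z) :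
    muMin (pairPrec μ) U = mu3 μ U := by
  ext x
  refine ⟨fun ⟨hxU, hx⟩ => ⟨hxU, fun y hy => ?_⟩, fun ⟨hxU, hx⟩ => ⟨hxU, fun y hy hyx => ?_⟩⟩
  · by_contra hxy
    exact hx y hy ⟨Set.pair_comm x y ▸ (hcover x y).resolve_left hxy, Set.pair_comm x y ▸ hxy⟩
  · exact hyx.2 (Set.pair_comm x y ▸ hx y hy)

lemma mem_or_mem_mu_pair (hfin : ∀ S : Set Z, S.Finite → S ∈ 𝒴) (hsub : ∀ X ∈ 𝒴, μ X ⊆ X)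
    (hNe : MuNonemptyFinite 𝒴 μ) (x y : Z) : x ∈ μ {x, y} ∨ y ∈ μ {x, y} := by
  have hxy : ({x, y} : Set Z) ∈ 𝒴 := hfin _ (Set.toFinite _)
  obtain ⟨w, hw⟩ := hNe _ hxy (Set.toFinite _) (Set.insert_nonempty x {y})
  rcases hsub _ hxy hw with rfl | rfl
  exacts [.inl hw, .inr hw]

section Finite

variable (hfin : ∀ S : Set Z, S.Finite → S ∈ 𝒴) (hEq : MuEqFinite 𝒴 μ)
include hfin hEq

lemma mu_pair_eq_inter {T : Set Z} (hT : T.Finite) {a b : Z} (hab : {a, b} ⊆ T)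
    (hne : (μ T ∩ {a, b}).Nonempty) : μ {a, b} = μ T ∩ {a, b} :=
  (hEq _ (hfin _ (Set.toFinite _)) T (hfin T hT) (Set.toFinite _) hT hab hne).symm

lemma mu_subset_mu3_of_finite (hsub : ∀ X ∈ 𝒴, μ X ⊆ X) {X : Set Z} (hX : X.Finite) :
    μ X ⊆ mu3 μ X := by
  intro x hx
  have hxX := hsub X (hfin X hX) hx
  refine ⟨hxX, fun y hy => ?_⟩
  rw [mu_pair_eq_inter hfin hEq hX (Set.insert_subset hxX (Set.singleton_subset_iff.2 hy))
    ⟨x, hx, by simp⟩]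
  exact ⟨hx, by simp⟩

lemma pairPrec_iff_of_finite {T : Set Z} (hT : T.Finite) {a b : Z} (hab : {a, b} ⊆ T)
    (hne : (μ T ∩ {a, b}).Nonempty) : pairPrec μ a b ↔ a ∈ μ T ∧ b ∉ μ T := by
  simp [pairPrec, mu_pair_eq_inter hfin hEq hT hab hne]

lemma rankedRel_pairPrec (hsub : ∀ X ∈ 𝒴, μ X ⊆ X) (hNe : MuNonemptyFinite 𝒴 μ) :
    RankedRel (pairPrec μ) := by
  intro x x' hxx' hx'x y
  set T : Set Z := {x, x', y}
  have hT : T.Finite := Set.toFinite T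
  have key : ∀ a ∈ T, ∀ b ∈ T, a ∈ μ T ∨ b ∈ μ T → (pairPrec μ a b ↔ a ∈ μ T ∧ b ∉ μ T) :=
    fun a ha b hb hab => pairPrec_iff_of_finite hfin hEq hT
      (Set.insert_subset ha (Set.singleton_subset_iff.2 hb))
      (hab.elim (fun h => ⟨a, h, by simp⟩) fun h => ⟨b, h, by simp⟩)
  have hxT : x ∈ T := by simp [T]
  have hx'T : x' ∈ T := by simp [T]
  have hyT : y ∈ T := by simp [T]
  have hxx'μ : x ∈ μ T ↔ x' ∈ μ T := by
    constructor
    · intro hx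
      by_contra hx'
      exact hxx' ((key x hxT x' hx'T (.inl hx)).2 ⟨hx, hx'⟩)
    · intro hx'
      by_contra hx
      exact hx'x ((key x' hx'T x hxT (.inl hx')).2 ⟨hx', hx⟩)
  have hxy : x ∈ μ T ∨ y ∈ μ T := by
    obtain ⟨w, hw⟩ := hNe T (hfin T hT) hT ⟨x, hxT⟩
    rcases hsub T (hfin T hT) hw with rfl | rfl | rfl
    exacts [.inl hw, .inl (hxx'μ.2 hw), .inr hw]
  have hx'y : x' ∈ μ T ∨ y ∈ μ T := hxy.imp_left hxx'μ.1
  rw [key y hyT x hxT hxy.symm, key y hyT x' hx'T hx'y.symm, key x hxT y hyT hxy,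
    key x' hx'T y hyT hx'y, hxx'μ]
  exact ⟨Iff.rfl, Iff.rfl⟩

end Finite

end

theorem ranked_representation_hull_general {Z : Type u} (𝒴 : Set (Set Z)) (μ : Set Z → Set Z)
    (hmem : ∀ X ∈ 𝒴, μ X ∈ 𝒴)
    (hInter : ∀ S : Set (Set Z), S ⊆ 𝒴 → S.Nonempty → ⋂₀ S ∈ 𝒴)
    (hUnion : ∀ A ∈ 𝒴, ∀ B ∈ 𝒴, A ∪ B ∈ 𝒴)
    (hsing : ∀ x : Z, {x} ∈ 𝒴)
    (hempty : (∅ : Set Z) ∈ 𝒴) :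
    (((∀ X ∈ 𝒴, ∀ Y ∈ 𝒴, X.Finite → Y.Finite → X ⊆ Y →
         (μ Y ∩ X).Nonempty → μ Y ∩ X = μ X) ∧
      (∀ X ∈ 𝒴, ∀ a ∈ X, a ∉ μ X → ∃ b ∈ X, a ∉ μ {a, b}) ∧
      (∀ U ∈ 𝒴, ¬ ∃ X ∈ 𝒴, mu3 μ U ⊆ X ∧ X ⊂ μ U) ∧
      (∀ X ∈ 𝒴, X.Finite → X.Nonempty → (μ X).Nonempty)) →
      ∃ prec : Z → Z → Prop, RankedRel prec ∧
        (∀ X ∈ 𝒴, X.Finite → X.Nonempty → (muMin prec X).Nonempty) ∧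
        ∀ U ∈ 𝒴, μ U = hull 𝒴 (muMin prec U)) ∧
    (∀ prec : Z → Z → Prop, RankedRel prec →
      (∀ X ∈ 𝒴, X.Finite → X.Nonempty → (muMin prec X).Nonempty) →
      (∀ U ∈ 𝒴, μ U = hull 𝒴 (muMin prec U)) →
      ((∀ X ∈ 𝒴, ∀ Y ∈ 𝒴, X.Finite → Y.Finite → X ⊆ Y →
         (μ Y ∩ X).Nonempty → μ Y ∩ X = μ X) ∧
      (∀ X ∈ 𝒴, ∀ a ∈ X, a ∉ μ X → ∃ b ∈ X, a ∉ μ {a, b}) ∧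
      (∀ U ∈ 𝒴, ¬ ∃ X ∈ 𝒴, mu3 μ U ⊆ X ∧ X ⊂ μ U) ∧
      (∀ X ∈ 𝒴, X.Finite → X.Nonempty → (μ X).Nonempty))) := by
  have hfin : ∀ S : Set Z, S.Finite → S ∈ 𝒴 := fun _ => mem_of_finite hUnion hsing hempty
  refine ⟨fun ⟨hEq, hIn, hPR3, hNe⟩ => ?_, fun prec hr hmin hrep => ?_⟩
  · have hinter : ∀ A ∈ 𝒴, ∀ B ∈ 𝒴, A ∩ B ∈ 𝒴 := fun _ hA _ hB => inter_mem hInter hA hB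
    have hsub : ∀ X ∈ 𝒴, μ X ⊆ X := fun _ hX => mu_subset_self hinter hmem hIn hPR3 hX
    have hmu3 : ∀ U, muMin (pairPrec μ) U = mu3 μ U :=
      muMin_pairPrec_eq_mu3 (mem_or_mem_mu_pair hfin hsub hNe)
    refine ⟨pairPrec μ, rankedRel_pairPrec hfin hEq hsub hNe, fun X hX hXf hXne => ?_,
      fun U hU => ?_⟩
    · rw [hmu3]
      exact (hNe X hX hXf hXne).mono (mu_subset_mu3_of_finite hfin hEq hsub hXf)
    · rw [hmu3]
      exact mu_eq_hull_mu3 hinter hmem hIn hPR3 hU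
  · have hirr : ∀ a, ¬ prec a a := fun a => not_prec_self_of_muMin_singleton
      (hmin {a} (hsing a) (Set.finite_singleton a) (Set.singleton_nonempty a))
    exact ⟨muEqFinite_of_repr hfin hrep hr, muIn_of_repr hfin hrep, muPR3_of_repr hfin hrep hirr,
      muNonemptyFinite_of_repr hrep hmin⟩

/-- Representation by ranked structures without copies and without
definability preservation: μ satisfies (μ=) for finite sets, (μ∈), (μPR3),
(μ∅fin) iff `μ(U) = ⌢(μ_≺(U))` for some ranked relation `≺` on `Z` for which
every finite nonempty member of 𝒴 has a minimal element. -/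
theorem ranked_representation_hull {Z : Type u} (𝒴 : Set (Set Z)) (μ : Set Z → Set Z)
    (hmem : ∀ X ∈ 𝒴, μ X ∈ 𝒴)
    (hInter : ∀ S : Set (Set Z), S ⊆ 𝒴 → S.Nonempty → ⋂₀ S ∈ 𝒴)
    (hUnion : ∀ A ∈ 𝒴, ∀ B ∈ 𝒴, A ∪ B ∈ 𝒴)
    (hsing : ∀ x : Z, {x} ∈ 𝒴)
    (hempty : (∅ : Set Z) ∈ 𝒴) (huniv : (Set.univ : Set Z) ∈ 𝒴) :
    (((∀ X ∈ 𝒴, ∀ Y ∈ 𝒴, X.Finite → Y.Finite → X ⊆ Y →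
         (μ Y ∩ X).Nonempty → μ Y ∩ X = μ X) ∧
      (∀ X ∈ 𝒴, ∀ a ∈ X, a ∉ μ X → ∃ b ∈ X, a ∉ μ {a, b}) ∧
      (∀ U ∈ 𝒴, ¬ ∃ X ∈ 𝒴, mu3 μ U ⊆ X ∧ X ⊂ μ U) ∧
      (∀ X ∈ 𝒴, X.Finite → X.Nonempty → (μ X).Nonempty)) →
      ∃ prec : Z → Z → Prop, RankedRel prec ∧
        (∀ X ∈ 𝒴, X.Finite → X.Nonempty → (muMin prec X).Nonempty) ∧
        ∀ U ∈ 𝒴, μ U = hull 𝒴 (muMin prec U)) ∧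
    (∀ prec : Z → Z → Prop, RankedRel prec →
      (∀ X ∈ 𝒴, X.Finite → X.Nonempty → (muMin prec X).Nonempty) →
      (∀ U ∈ 𝒴, μ U = hull 𝒴 (muMin prec U)) →
      ((∀ X ∈ 𝒴, ∀ Y ∈ 𝒴, X.Finite → Y.Finite → X ⊆ Y →
         (μ Y ∩ X).Nonempty → μ Y ∩ X = μ X) ∧
      (∀ X ∈ 𝒴, ∀ a ∈ X, a ∉ μ X → ∃ b ∈ X, a ∉ μ {a, b}) ∧
      (∀ U ∈ 𝒴, ¬ ∃ X ∈ 𝒴, mu3 μ U ⊆ X ∧ X ⊂ μ U) ∧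
      (∀ X ∈ 𝒴, X.Finite → X.Nonempty → (μ X).Nonempty))) :=
  ranked_representation_hull_general 𝒴 μ hmem hInter hUnion hsing hempty
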